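/- Let λ > 0 and let Q = (a,b) ∈ Ω_λ with λ|b| < 1. The λ-Funk distance from the horizontal line s: x₂ = c (with λ|c| < 1) to Q is d_F(s,Q) = (1/λ)ln[(1 - λ²bc + λ|c - b|)/(1 - λ²b²)], realized at the point P* = (ra, c) ∈ s where r = (1 - λ²bc + λ|c-b|)/(1 - λ²b²); i.e., d_F(P*,Q) = (1/λ)ln r and d_F(P',Q) ≥ (1/λ)ln r for all P' ∈ s ∩ Ω_λ. -/

import Mathlib

open RealInnerProductSpace Classical

noncomputable def pt (a b : ℝ) : EuclideanSpace ℝ (Fin 2) :=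
  (WithLp.equiv 2 (Fin 2 → ℝ)).symm ![a, b]

/-- The λ-Funk metric. -/
noncomputable def Funk (lam : ℝ) (x y : EuclideanSpace ℝ (Fin 2)) : ℝ :=
  (Real.sqrt (lam ^ 2 * ⟪x, y⟫ ^ 2 + ‖y‖ ^ 2 * (1 - lam ^ 2 * ‖x‖ ^ 2)) + lam * ⟪x, y⟫) /
    (1 - lam ^ 2 * ‖x‖ ^ 2)

/-- The λ-Funk distance. -/
noncomputable def dF (lam : ℝ) (P Q : EuclideanSpace ℝ (Fin 2)) : ℝ :=
  if P = Q then 0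
  else (1 / lam) * Real.log
    ((Real.sqrt (lam ^ 2 * ⟪P, Q - P⟫ ^ 2 + (1 - lam ^ 2 * ‖P‖ ^ 2) * ‖Q - P‖ ^ 2)
        - lam * ⟪P, Q - P⟫) /
     (Real.sqrt (lam ^ 2 * ⟪P, Q - P⟫ ^ 2 + (1 - lam ^ 2 * ‖P‖ ^ 2) * ‖Q - P‖ ^ 2)
        - lam * ⟪Q, Q - P⟫))

/-! The ratio `ρ` inside the logarithm of `dF λ P Q` is the unique root `t > 1` of the concave
quadratic equation `λ² ‖P - t • Q‖² = (t - 1)²`, i.e. of `‖P / t - Q‖ = (t - 1) / (λ t)`.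
For `P = (a', c)` and `Q = (a, b)` the second coordinate of that equation gives
`λ |c - ρ b| ≤ ρ - 1`, and the least `t` with `λ |c - t b| ≤ t - 1` is `r`. At `P* = (r a, c)` the
first coordinate vanishes and the bound is attained, so there `ρ = r`. -/

theorem eq_of_quadratic_eq_zero_of_one_lt {A B C s t : ℝ} (hA : A < 0) (h1 : 0 < A + B + C)
    (hs : A * s ^ 2 + B * s + C = 0) (ht : A * t ^ 2 + B * t + C = 0) (hs1 : 1 < s) (ht1 : 1 < t) :
    s = t := by
  by_contra hst
  have hsum : A * (s + t) + B = 0 := by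
    refine (mul_eq_zero.1 (?_ : (s - t) * (A * (s + t) + B) = 0)).resolve_left (sub_ne_zero.2 hst)
    linear_combination hs - ht
  have hprod : A + B + C = A * (s - 1) * (t - 1) := by linear_combination hs + (1 - s) * hsum
  nlinarith [mul_pos (sub_pos.2 hs1) (sub_pos.2 ht1)]

section InnerProductSpace

variable {E : Type*} [NormedAddCommGroup E] [InnerProductSpace ℝ E]

noncomputable def funkRatio (lam : ℝ) (P Q : E) : ℝ :=
  (Real.sqrt (lam ^ 2 * ⟪P, Q - P⟫ ^ 2 + (1 - lam ^ 2 * ‖P‖ ^ 2) * ‖Q - P‖ ^ 2) - lam * ⟪P, Q - P⟫) /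
    (Real.sqrt (lam ^ 2 * ⟪P, Q - P⟫ ^ 2 + (1 - lam ^ 2 * ‖P‖ ^ 2) * ‖Q - P‖ ^ 2) - lam * ⟪Q, Q - P⟫)

theorem norm_sub_smul_sq (P Q : E) (t : ℝ) :
    ‖P - t • Q‖ ^ 2 = ‖P‖ ^ 2 - 2 * t * ⟪P, Q⟫ + t ^ 2 * ‖Q‖ ^ 2 := by
  rw [norm_sub_sq_real, inner_smul_right, norm_smul, mul_pow, Real.norm_eq_abs, sq_abs]
  ring

theorem funkRatio_spec {lam : ℝ} {P Q : E} (hlam : 0 < lam) (hQ : lam ^ 2 * ‖Q‖ ^ 2 < 1)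
    (hPQ : P ≠ Q) :
    1 < funkRatio lam P Q ∧ lam ^ 2 * ‖P - funkRatio lam P Q • Q‖ ^ 2 = (funkRatio lam P Q - 1) ^ 2 := by
  have hV : 0 < ‖Q - P‖ ^ 2 := by
    have := norm_pos_iff.2 (sub_ne_zero.2 hPQ.symm)
    positivity
  rw [norm_sub_sq_real] at hV
  rw [funkRatio, norm_sub_smul_sq, norm_sub_sq_real]
  simp only [inner_sub_right, real_inner_self_eq_norm_sq, real_inner_comm P Q] at hV ⊢
  generalize ‖P‖ ^ 2 = p, ⟪P, Q⟫ = m, ‖Q‖ ^ 2 = q at *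
  set S := Real.sqrt (lam ^ 2 * (m - p) ^ 2 + (1 - lam ^ 2 * p) * (q - 2 * m + p))
  -- the radicand is also `(λ ⟪Q, Q - P⟫)² + (1 - λ² ‖Q‖²) ‖Q - P‖²`, so the denominator is positive
  have hR : lam ^ 2 * (m - p) ^ 2 + (1 - lam ^ 2 * p) * (q - 2 * m + p)
      = (lam * (q - m)) ^ 2 + (1 - lam ^ 2 * q) * (q - 2 * m + p) := by ring
  have hS2 : S ^ 2 = (lam * (q - m)) ^ 2 + (1 - lam ^ 2 * q) * (q - 2 * m + p) := by
    rw [Real.sq_sqrt (hR ▸ by nlinarith [sq_nonneg (lam * (q - m)), mul_pos (sub_pos.2 hQ) hV]), hR]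
  have hD : 0 < S - lam * (q - m) := by
    have := abs_lt_of_sq_lt_sq (a := lam * (q - m))
      (by nlinarith [mul_pos (sub_pos.2 hQ) hV]) (Real.sqrt_nonneg _)
    linarith [le_abs_self (lam * (q - m))]
  have hND : S - lam * (m - p) = (S - lam * (q - m)) + lam * (q - 2 * m + p) := by ring
  refine ⟨by rw [hND, lt_div_iff₀ hD]; nlinarith, ?_⟩
  rw [div_sub_one hD.ne', div_pow, ← sub_eq_zero]
  field_simp
  linear_combination (lam ^ 2 * (q - 2 * m + p)) * hS2

theorem funkRatio_eq_iff {lam t : ℝ} {P Q : E} (hlam : 0 < lam) (hQ : lam ^ 2 * ‖Q‖ ^ 2 < 1)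
    (hPQ : P ≠ Q) :
    funkRatio lam P Q = t ↔ 1 < t ∧ lam ^ 2 * ‖P - t • Q‖ ^ 2 = (t - 1) ^ 2 := by
  obtain ⟨hρ1, hρ⟩ := funkRatio_spec hlam hQ hPQ
  refine ⟨fun h => h ▸ ⟨hρ1, hρ⟩, fun ⟨ht1, ht⟩ => ?_⟩
  -- both are roots of the concave quadratic `λ²‖P - t • Q‖² - (t - 1)²`, which is positive at `t = 1`
  have hPQ' : 0 < lam ^ 2 * ‖P - Q‖ ^ 2 := by
    have := norm_pos_iff.2 (sub_ne_zero.2 hPQ)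
    positivity
  rw [norm_sub_smul_sq] at hρ ht
  rw [norm_sub_sq_real] at hPQ'
  exact eq_of_quadratic_eq_zero_of_one_lt (A := lam ^ 2 * ‖Q‖ ^ 2 - 1)
    (B := 2 - 2 * lam ^ 2 * ⟪P, Q⟫) (C := lam ^ 2 * ‖P‖ ^ 2 - 1) (by linarith) (by linarith)
    (by linear_combination hρ) (by linear_combination ht) hρ1 ht1

end InnerProductSpace

theorem pt_inj {a b c d : ℝ} : pt a b = pt c d ↔ a = c ∧ b = d := by
  simp [pt]

theorem pt_sub (a b c d : ℝ) : pt a b - pt c d = pt (a - c) (b - d) := by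
  ext i; fin_cases i <;> simp [pt]

theorem smul_pt (t a b : ℝ) : t • pt a b = pt (t * a) (t * b) := by
  ext i; fin_cases i <;> simp [pt]

theorem norm_pt_sq (a b : ℝ) : ‖pt a b‖ ^ 2 = a ^ 2 + b ^ 2 := by
  simp [EuclideanSpace.norm_sq_eq, pt, Fin.sum_univ_two]

theorem dF_self (lam : ℝ) (P : EuclideanSpace ℝ (Fin 2)) : dF lam P P = 0 := if_pos rfl

theorem dF_of_ne (lam : ℝ) {P Q : EuclideanSpace ℝ (Fin 2)} (h : P ≠ Q) :
    dF lam P Q = 1 / lam * Real.log (funkRatio lam P Q) := if_neg h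

noncomputable def funkLineRatio (lam b c : ℝ) : ℝ :=
  (1 - lam ^ 2 * b * c + lam * |c - b|) / (1 - lam ^ 2 * b ^ 2)

section FunkLineRatio

variable {lam b c : ℝ}

theorem funkLineRatio_eq_max (hlam : 0 < lam) (hb : lam * |b| < 1) :
    funkLineRatio lam b c = max ((1 + lam * c) / (1 + lam * b)) ((1 - lam * c) / (1 - lam * b)) := by
  obtain ⟨hb₁, hb₂⟩ := abs_lt.1 (by rwa [abs_mul, abs_of_pos hlam] : |lam * b| < 1)
  have hx : lam * |c - b| = max (lam * (c - b)) (-(lam * (c - b))) := by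
    rw [← abs_eq_max_neg, abs_mul, abs_of_pos hlam]
  rw [funkLineRatio, hx, ← max_add_add_left, ← max_div_div_right (by nlinarith)]
  congr 1 <;> rw [div_eq_div_iff (by nlinarith) (by linarith)] <;> ring

theorem funkLineRatio_le_iff (hlam : 0 < lam) (hb : lam * |b| < 1) {t : ℝ} :
    funkLineRatio lam b c ≤ t ↔ lam * |c - t * b| ≤ t - 1 := by
  obtain ⟨hb₁, hb₂⟩ := abs_lt.1 (by rwa [abs_mul, abs_of_pos hlam] : |lam * b| < 1)
  have habs : lam * |c - t * b| = |lam * (c - t * b)| := by rw [abs_mul, abs_of_pos hlam]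
  rw [funkLineRatio_eq_max hlam hb, max_le_iff, div_le_iff₀ (by linarith), div_le_iff₀ (by linarith),
    habs, abs_le]
  constructor <;> rintro ⟨h₁, h₂⟩ <;> constructor <;> linarith

theorem mul_abs_sub_funkLineRatio_mul (hlam : 0 < lam) (hb : lam * |b| < 1) :
    lam * |c - funkLineRatio lam b c * b| = funkLineRatio lam b c - 1 := by
  set r := funkLineRatio lam b c with hr
  refine le_antisymm ((funkLineRatio_le_iff hlam hb).1 le_rfl) ?_
  obtain ⟨hb₁, hb₂⟩ := abs_lt.1 (by rwa [abs_mul, abs_of_pos hlam] : |lam * b| < 1)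
  rcases max_choice ((1 + lam * c) / (1 + lam * b)) ((1 - lam * c) / (1 - lam * b)) with h | h <;>
    rw [← funkLineRatio_eq_max hlam hb, ← hr, eq_div_iff (by linarith)] at h
  · calc r - 1 = lam * (c - r * b) := by linarith
      _ ≤ lam * |c - r * b| := mul_le_mul_of_nonneg_left (le_abs_self _) hlam.le
  · calc r - 1 = lam * -(c - r * b) := by linarith
      _ ≤ lam * |c - r * b| := mul_le_mul_of_nonneg_left (neg_le_abs _) hlam.le

theorem one_le_funkLineRatio (hlam : 0 < lam) (hb : lam * |b| < 1) : 1 ≤ funkLineRatio lam b c :=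
  sub_nonneg.1 (mul_abs_sub_funkLineRatio_mul hlam hb ▸ by positivity)

theorem funkLineRatio_eq_one_iff (hlam : 0 < lam) (hb : lam * |b| < 1) :
    funkLineRatio lam b c = 1 ↔ c = b := by
  refine ⟨fun h => ?_, fun h => le_antisymm ((funkLineRatio_le_iff hlam hb).2 (by simp [h]))
    (one_le_funkLineRatio hlam hb)⟩
  have := mul_abs_sub_funkLineRatio_mul (c := c) hlam hb
  rw [h, one_mul, sub_self, mul_eq_zero, abs_eq_zero, sub_eq_zero] at this
  exact this.resolve_left hlam.ne'

end FunkLineRatio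

theorem dF_line_to_point_general (lam a b c : ℝ) (hlam : 0 < lam)
    (hQ : ‖pt a b‖ < 1 / lam) (hb : lam * |b| < 1) :
    dF lam (pt (((1 - lam ^ 2 * b * c + lam * |c - b|) / (1 - lam ^ 2 * b ^ 2)) * a) c) (pt a b)
        = (1 / lam) * Real.log ((1 - lam ^ 2 * b * c + lam * |c - b|) / (1 - lam ^ 2 * b ^ 2)) ∧
    ∀ a' : ℝ, ‖pt a' c‖ < 1 / lam →
      (1 / lam) * Real.log ((1 - lam ^ 2 * b * c + lam * |c - b|) / (1 - lam ^ 2 * b ^ 2)) ≤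
        dF lam (pt a' c) (pt a b) := by
  rw [show (1 - lam ^ 2 * b * c + lam * |c - b|) / (1 - lam ^ 2 * b ^ 2) = funkLineRatio lam b c
    from rfl]
  set r := funkLineRatio lam b c
  have hQ' : lam ^ 2 * ‖pt a b‖ ^ 2 < 1 := by
    rw [← mul_pow]
    exact pow_lt_one₀ (by positivity) ((lt_div_iff₀' hlam).1 hQ) two_ne_zero
  have hr_of_eq : c = b → r = 1 := (funkLineRatio_eq_one_iff hlam hb).2
  refine ⟨?_, fun a' _ => ?_⟩
  · obtain rfl | hcb := eq_or_ne c b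
    · rw [hr_of_eq rfl, one_mul, dF_self, Real.log_one, mul_zero]
    · have hne : pt (r * a) c ≠ pt a b := fun h => hcb (pt_inj.1 h).2
      have hcirc : lam ^ 2 * ‖pt (r * a) c - r • pt a b‖ ^ 2 = (r - 1) ^ 2 := by
        rw [smul_pt, pt_sub, norm_pt_sq, sub_self, ← mul_abs_sub_funkLineRatio_mul hlam hb, mul_pow,
          sq_abs]
        ring
      have hr1 : 1 < r := (one_le_funkLineRatio hlam hb).lt_of_ne'
        (mt (funkLineRatio_eq_one_iff hlam hb).1 hcb)
      rw [dF_of_ne lam hne, (funkRatio_eq_iff hlam hQ' hne).2 ⟨hr1, hcirc⟩]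
  · by_cases hne : pt a' c = pt a b
    · rw [hne, dF_self, hr_of_eq (pt_inj.1 hne).2, Real.log_one, mul_zero]
    obtain ⟨hρ1, hcirc⟩ := funkRatio_spec hlam hQ' hne
    set ρ := funkRatio lam (pt a' c) (pt a b)
    rw [smul_pt, pt_sub, norm_pt_sq] at hcirc
    have hr_le : r ≤ ρ := by
      rw [funkLineRatio_le_iff hlam hb, ← abs_of_pos hlam, ← abs_mul]
      exact abs_le_of_sq_le_sq (by nlinarith [sq_nonneg (lam * (a' - ρ * a))]) (by linarith)
    rw [dF_of_ne lam hne]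
    gcongr
    exact zero_lt_one.trans_le (one_le_funkLineRatio hlam hb)

theorem dF_line_to_point (lam a b c : ℝ) (hlam : 0 < lam)
    (hQ : ‖pt a b‖ < 1 / lam) (hb : lam * |b| < 1) (hc : lam * |c| < 1) :
    dF lam (pt (((1 - lam ^ 2 * b * c + lam * |c - b|) / (1 - lam ^ 2 * b ^ 2)) * a) c) (pt a b)
        = (1 / lam) * Real.log ((1 - lam ^ 2 * b * c + lam * |c - b|) / (1 - lam ^ 2 * b ^ 2)) ∧
    ∀ a' : ℝ, ‖pt a' c‖ < 1 / lam →
      (1 / lam) * Real.log ((1 - lam ^ 2 * b * c + lam * |c - b|) / (1 - lam ^ 2 * b ^ 2)) ≤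
        dF lam (pt a' c) (pt a b) :=
  dF_line_to_point_general lam a b c hlam hQ hb
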